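/- arXiv:1905.06600 — 3 statements merged into one kernel-verified Lean document; each statement's English description precedes it below -/
import Mathlib

section
/- Let P, Q, R be probability distributions on a finite alphabet X with P strictly positive, and let p_min = min_x P(x). For sufficiently small ε > 0, if D(P||Q) ≤ ε² and D(P||R) ≤ ε² and R(x) > p_min/2 for all x, then D(Q||R) ≤ (16/p_min)·ε². -/
/-!
By Pinsker, `‖P - Q‖₁` and `‖P - R‖₁` are at most `√2 ε`, so `‖Q - R‖₁ ≤ 2√2 ε`.
The χ² bound `D(Q‖R) ≤ ∑ (Q - R)² / R` and `R > p_min / 2` then give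
`D(Q‖R) ≤ ‖Q - R‖₁² / (p_min / 2) ≤ 16 ε² / p_min`.

Pinsker with its sharp constant comes from the pointwise bound
`a log (a / b) - a + b ≥ 3 (a - b)² / (2 (a + 2 b))` and Cauchy–Schwarz with the weights
`2 (P + 2 Q) / 3`, which sum to `2`.
-/

open Finset Real

lemma sub_one_mul_five_mul_add_one_div_le_log {t : ℝ} (ht : 0 < t) :
    (t - 1) * (5 * t + 1) / (2 * t * (t + 2)) ≤ log t := by
  set φ : ℝ → ℝ := fun s => log s - (s - 1) * (5 * s + 1) / (2 * s * (s + 2))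
  set φ' : ℝ → ℝ := fun s => (s - 1) ^ 3 / (s ^ 2 * (s + 2) ^ 2)
  have hφ : ∀ s ∈ Set.Ioi (0 : ℝ), HasDerivAt φ (φ' s) s := fun s (hs : 0 < s) => by
    show HasDerivAt φ ((s - 1) ^ 3 / (s ^ 2 * (s + 2) ^ 2)) s
    have hnum : HasDerivAt (fun s : ℝ => (s - 1) * (5 * s + 1)) (10 * s - 4) s :=
      (((hasDerivAt_id' s).sub_const 1).mul
        (((hasDerivAt_id' s).const_mul 5).add_const 1)).congr_deriv (by ring)
    have hden : HasDerivAt (fun s : ℝ => 2 * s * (s + 2)) (4 * s + 4) s :=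
      (((hasDerivAt_id' s).const_mul 2).mul ((hasDerivAt_id' s).add_const 2)).congr_deriv
        (by ring)
    refine ((hasDerivAt_log hs.ne').sub (hnum.div hden (by positivity))).congr_deriv ?_
    field_simp
    ring
  have hcont : ContinuousOn φ (Set.Ioi 0) :=
    fun s hs => (hφ s hs).continuousAt.continuousWithinAt
  suffices φ 1 ≤ φ t by simpa [φ] using this
  rcases le_total t 1 with h | h
  · refine antitoneOn_of_hasDerivWithinAt_nonpos (f' := φ') (convex_Ioc 0 1)
      (hcont.mono Set.Ioc_subset_Ioi_self) (fun s hs => ?_) (fun s hs => ?_)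
      ⟨ht, h⟩ ⟨one_pos, le_rfl⟩ h
    · rw [interior_Ioc] at hs
      exact (hφ s hs.1).hasDerivWithinAt
    · rw [interior_Ioc] at hs
      have : (s - 1) ^ 3 ≤ 0 := by nlinarith [hs.2, sq_nonneg (s - 1)]
      exact div_nonpos_of_nonpos_of_nonneg this (by positivity)
  · refine monotoneOn_of_hasDerivWithinAt_nonneg (f' := φ') (convex_Ici 1)
      (hcont.mono fun s (hs : 1 ≤ s) => one_pos.trans_le hs) (fun s hs => ?_) (fun s hs => ?_)
      Set.self_mem_Ici h h
    · rw [interior_Ici] at hs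
      exact (hφ s (one_pos.trans hs.out)).hasDerivWithinAt
    · rw [interior_Ici] at hs
      have : 0 ≤ s - 1 := by linarith [hs.out]
      positivity

lemma three_mul_sq_sub_div_le_mul_log_div_sub_add {a b : ℝ} (ha : 0 ≤ a) (hb : 0 < b) :
    3 * (a - b) ^ 2 / (2 * (a + 2 * b)) ≤ a * log (a / b) - a + b := by
  rcases ha.eq_or_lt with rfl | ha
  · rw [div_le_iff₀ (by positivity)]
    nlinarith
  have hlog := mul_le_mul_of_nonneg_left
    (sub_one_mul_five_mul_add_one_div_le_log (div_pos ha hb)) ha.le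
  have hrw : a * ((a / b - 1) * (5 * (a / b) + 1) / (2 * (a / b) * (a / b + 2))) =
      a - b + 3 * (a - b) ^ 2 / (2 * (a + 2 * b)) := by
    field_simp
    ring
  linarith

lemma sq_sum_abs_sub_le_two_mul_sum_mul_log_div {X : Type*} [Fintype X] {P Q : X → ℝ}
    (hP0 : ∀ x, 0 ≤ P x) (hQ0 : ∀ x, 0 < Q x) (hP1 : ∑ x, P x = 1) (hQ1 : ∑ x, Q x = 1) :
    (∑ x, |P x - Q x|) ^ 2 ≤ 2 * ∑ x, P x * log (P x / Q x) := by
  have hw : ∀ x ∈ univ, 0 < 2 * (P x + 2 * Q x) / 3 := fun x _ => by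
    have := hP0 x; have := hQ0 x; positivity
  have hw_sum : ∑ x, 2 * (P x + 2 * Q x) / 3 = 2 := by
    simp only [← sum_div, ← mul_sum, sum_add_distrib, hP1, hQ1]
    norm_num
  have hterm : ∀ x ∈ univ, |P x - Q x| ^ 2 / (2 * (P x + 2 * Q x) / 3) ≤
      P x * log (P x / Q x) - P x + Q x := fun x _ => by
    rw [sq_abs, div_div_eq_mul_div, mul_comm]
    exact three_mul_sq_sub_div_le_mul_log_div_sub_add (hP0 x) (hQ0 x)
  have hcs := (sq_sum_div_le_sum_sq_div univ (fun x => |P x - Q x|) hw).trans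
    (sum_le_sum hterm)
  rw [hw_sum, sum_add_distrib, sum_sub_distrib, hP1, hQ1] at hcs
  linarith

lemma mul_log_div_le_sq_sub_div_add_sub {a b : ℝ} (ha : 0 ≤ a) (hb : 0 < b) :
    a * log (a / b) ≤ (a - b) ^ 2 / b + (a - b) := by
  rcases ha.eq_or_lt with rfl | ha
  · simp [sq, hb.ne']
  calc a * log (a / b) ≤ a * (a / b - 1) :=
        mul_le_mul_of_nonneg_left (log_le_sub_one_of_pos (div_pos ha hb)) ha.le
    _ = (a - b) ^ 2 / b + (a - b) := by field_simp; ring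

lemma sum_mul_log_div_le_sum_sq_sub_div {X : Type*} [Fintype X] {Q R : X → ℝ}
    (hQ0 : ∀ x, 0 ≤ Q x) (hR0 : ∀ x, 0 < R x) (hQR : ∑ x, Q x = ∑ x, R x) :
    ∑ x, Q x * log (Q x / R x) ≤ ∑ x, (Q x - R x) ^ 2 / R x := by
  have h := sum_le_sum fun x (_ : x ∈ univ) => mul_log_div_le_sq_sub_div_add_sub (hQ0 x) (hR0 x)
  rwa [sum_add_distrib, sum_sub_distrib, hQR, sub_self, add_zero] at h

lemma sum_sq_div_le_sq_sum_abs_div {ι : Type*} (s : Finset ι) {f w : ι → ℝ} {c : ℝ}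
    (hc : 0 < c) (hw : ∀ i ∈ s, c ≤ w i) :
    ∑ i ∈ s, f i ^ 2 / w i ≤ (∑ i ∈ s, |f i|) ^ 2 / c :=
  calc ∑ i ∈ s, f i ^ 2 / w i ≤ ∑ i ∈ s, |f i| ^ 2 / c :=
        sum_le_sum fun i hi => by
          rw [sq_abs]; exact div_le_div_of_nonneg_left (sq_nonneg _) hc (hw i hi)
    _ = (∑ i ∈ s, |f i| ^ 2) / c := (sum_div ..).symm
    _ ≤ (∑ i ∈ s, |f i|) ^ 2 / c := by
        gcongr; exact sum_sq_le_sq_sum_of_nonneg fun i _ => abs_nonneg _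

/-- For sufficiently small ε, if D(P‖Q) ≤ ε² and D(P‖R) ≤ ε² and R(x) > p_min/2,
then D(Q‖R) ≤ (16/p_min) ε². -/
theorem stmt_1 {X : Type*} [Fintype X] [Nonempty X] (P : X → ℝ)
    (hP0 : ∀ x, 0 < P x) (hP1 : ∑ x, P x = 1) :
    ∃ ε₀ > 0, ∀ ε : ℝ, 0 < ε → ε < ε₀ →
      ∀ Q R : X → ℝ,
        (∀ x, 0 < Q x) → ∑ x, Q x = 1 →
        (∀ x, 0 < R x) → ∑ x, R x = 1 →
        ∑ x, P x * Real.log (P x / Q x) ≤ ε ^ 2 →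
        ∑ x, P x * Real.log (P x / R x) ≤ ε ^ 2 →
        (∀ x, R x > (Finset.univ.inf' Finset.univ_nonempty P) / 2) →
        ∑ x, Q x * Real.log (Q x / R x) ≤
          (16 / Finset.univ.inf' Finset.univ_nonempty P) * ε ^ 2 := by
  set p := univ.inf' univ_nonempty P
  have hp : 0 < p := (lt_inf'_iff univ_nonempty).2 fun x _ => hP0 x
  refine ⟨1, one_pos, fun ε _ _ Q R hQ0 hQ1 hR0 hR1 hDQ hDR hRp => ?_⟩
  have hPQ := sq_sum_abs_sub_le_two_mul_sum_mul_log_div (fun x => (hP0 x).le) hQ0 hP1 hQ1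
  have hPR := sq_sum_abs_sub_le_two_mul_sum_mul_log_div (fun x => (hP0 x).le) hR0 hP1 hR1
  have hQR : ∑ x, |Q x - R x| ≤ ∑ x, |P x - Q x| + ∑ x, |P x - R x| := by
    rw [← sum_add_distrib]
    exact sum_le_sum fun x _ => abs_sub_comm (P x) (Q x) ▸ abs_sub_le (Q x) (P x) (R x)
  calc ∑ x, Q x * log (Q x / R x) ≤ ∑ x, (Q x - R x) ^ 2 / R x :=
        sum_mul_log_div_le_sum_sq_sub_div (fun x => (hQ0 x).le) hR0 (hQ1.trans hR1.symm)
    _ ≤ (∑ x, |Q x - R x|) ^ 2 / (p / 2) :=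
        sum_sq_div_le_sq_sum_abs_div univ (by positivity) fun x _ => (hRp x).le
    _ ≤ (8 * ε ^ 2) / (p / 2) := by
        gcongr
        nlinarith [sum_nonneg fun x (_ : x ∈ univ) => abs_nonneg (Q x - R x),
          sq_nonneg (∑ x, |P x - Q x| - ∑ x, |P x - R x|)]
    _ = 16 / p * ε ^ 2 := by field_simp; ring
end

section
/- For p ∈ (0,1) and all real t, log(p·e^t + (1-p)·e^{-(p/(1-p))t}) ≥ (p/2)·min{δ², t²}, where δ is a constant for which the inequality log(p·e^s + (1-p)·e^{-(p/(1-p))s}) > (p/2)s² holds for all 0 < |s| ≤ δ. -/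
/-
`p e^t + (1 - p) e^{-p t/(1-p)}` is the moment generating function of a centred two-point law,
so its derivative `p (e^t - e^{-p t/(1-p)})` has the sign of `t`: it decreases on `(-∞, 0]` and
increases on `[0, ∞)`. For `|t| ≤ δ` the claim is the hypothesis (or trivial at `t = 0`); for
`|t| > δ` the value at `t` dominates the value at `±δ`, where the hypothesis gives `(p/2) δ²`.
-/

open Real Set

noncomputable section

namespace TwoPoint

def mgf (p t : ℝ) : ℝ := p * exp t + (1 - p) * exp (-(p / (1 - p)) * t)

theorem mgf_zero (p : ℝ) : mgf p 0 = 1 := by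
  simp [mgf]

theorem mgf_pos {p : ℝ} (hp : 0 < p) (hp1 : p ≤ 1) (t : ℝ) : 0 < mgf p t := by
  have h1p : 0 ≤ 1 - p := by linarith
  unfold mgf
  positivity

theorem hasDerivAt_mgf {p : ℝ} (hp1 : p ≠ 1) (t : ℝ) :
    HasDerivAt (mgf p) (p * (exp t - exp (-(p / (1 - p)) * t))) t := by
  have h1p : 1 - p ≠ 0 := sub_ne_zero.mpr hp1.symm
  have hexp := ((hasDerivAt_id t).const_mul (-(p / (1 - p)))).exp
  simp only [id_eq, mul_one] at hexp
  have h := ((Real.hasDerivAt_exp t).const_mul p).add (hexp.const_mul (1 - p))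
  have hval : p * exp t + (1 - p) * (exp (-(p / (1 - p)) * t) * -(p / (1 - p))) =
      p * (exp t - exp (-(p / (1 - p)) * t)) := by
    field_simp
    ring
  rw [hval] at h
  exact h

theorem deriv_mgf_nonneg {p t : ℝ} (hp : 0 ≤ p) (hp1 : p < 1) (ht : 0 ≤ t) :
    0 ≤ p * (exp t - exp (-(p / (1 - p)) * t)) := by
  have hc : 0 ≤ p / (1 - p) := div_nonneg hp (by linarith)
  have : -(p / (1 - p)) * t ≤ t := by nlinarith
  exact mul_nonneg hp (sub_nonneg.mpr (exp_le_exp.mpr this))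

theorem deriv_mgf_nonpos {p t : ℝ} (hp : 0 ≤ p) (hp1 : p < 1) (ht : t ≤ 0) :
    p * (exp t - exp (-(p / (1 - p)) * t)) ≤ 0 := by
  have hc : 0 ≤ p / (1 - p) := div_nonneg hp (by linarith)
  have : t ≤ -(p / (1 - p)) * t := by nlinarith
  exact mul_nonpos_of_nonneg_of_nonpos hp (sub_nonpos.mpr (exp_le_exp.mpr this))

theorem monotoneOn_mgf {p : ℝ} (hp : 0 ≤ p) (hp1 : p < 1) : MonotoneOn (mgf p) (Ici 0) := by
  have hd := hasDerivAt_mgf hp1.ne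
  refine monotoneOn_of_hasDerivWithinAt_nonneg (convex_Ici 0)
    (fun t _ => (hd t).continuousAt.continuousWithinAt) (fun t _ => (hd t).hasDerivWithinAt) ?_
  intro t ht
  rw [interior_Ici] at ht
  exact deriv_mgf_nonneg hp hp1 (le_of_lt ht)

theorem antitoneOn_mgf {p : ℝ} (hp : 0 ≤ p) (hp1 : p < 1) : AntitoneOn (mgf p) (Iic 0) := by
  have hd := hasDerivAt_mgf hp1.ne
  refine antitoneOn_of_hasDerivWithinAt_nonpos (convex_Iic 0)
    (fun t _ => (hd t).continuousAt.continuousWithinAt) (fun t _ => (hd t).hasDerivWithinAt) ?_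
  intro t ht
  rw [interior_Iic] at ht
  exact deriv_mgf_nonpos hp hp1 (le_of_lt ht)

theorem exists_abs_eq_mgf_le {p δ t : ℝ} (hp : 0 ≤ p) (hp1 : p < 1) (hδ : 0 ≤ δ)
    (ht : δ ≤ |t|) : ∃ s, |s| = δ ∧ mgf p s ≤ mgf p t := by
  rcases le_total 0 t with ht0 | ht0
  · rw [abs_of_nonneg ht0] at ht
    exact ⟨δ, abs_of_nonneg hδ, monotoneOn_mgf hp hp1 hδ (hδ.trans ht) ht⟩
  · rw [abs_of_nonpos ht0] at ht
    refine ⟨-δ, by rw [abs_neg, abs_of_nonneg hδ], ?_⟩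
    exact antitoneOn_mgf hp hp1 ht0 (by simpa using hδ) (by linarith)

end TwoPoint

end

open TwoPoint in
/-- For p ∈ (0,1) and all t, log(p e^t + (1-p) e^{-(p/(1-p)) t}) ≥ (p/2) min{δ², t²},
given that the strict inequality holds for all 0 < |s| ≤ δ. -/
theorem stmt_5 (p δ : ℝ) (hp : 0 < p) (hp1 : p < 1) (hδ : 0 < δ)
    (hδ' : ∀ s : ℝ, 0 < |s| → |s| ≤ δ →
      (p / 2) * s ^ 2 <
        Real.log (p * Real.exp s + (1 - p) * Real.exp (-(p / (1 - p)) * s))) :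
    ∀ t : ℝ,
      (p / 2) * min (δ ^ 2) (t ^ 2) ≤
        Real.log (p * Real.exp t + (1 - p) * Real.exp (-(p / (1 - p)) * t)) := by
  intro t
  change (p / 2) * min (δ ^ 2) (t ^ 2) ≤ log (mgf p t)
  rcases le_or_gt |t| δ with htδ | hδt
  · rcases eq_or_ne t 0 with rfl | ht0
    · simp [mgf_zero, sq_nonneg]
    · calc (p / 2) * min (δ ^ 2) (t ^ 2) ≤ (p / 2) * t ^ 2 := by gcongr; exact min_le_right _ _
        _ ≤ log (mgf p t) := (hδ' t (abs_pos.mpr ht0) htδ).le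
  · obtain ⟨s, hs, hst⟩ := exists_abs_eq_mgf_le hp.le hp1 hδ.le hδt.le
    calc (p / 2) * min (δ ^ 2) (t ^ 2) ≤ (p / 2) * s ^ 2 := by
          gcongr; rw [← sq_abs s, hs]; exact min_le_left _ _
      _ ≤ log (mgf p s) := (hδ' s (hs ▸ hδ) hs.le).le
      _ ≤ log (mgf p t) := log_le_log (mgf_pos hp hp1.le s) hst
end

section
/- Markov chain information vector transfer: if X ↔ Y ↔ V form a Markov chain, then for each v, the information vector φ^{X|V}_v of P_{X|V}(·|v) relative to P_X satisfies φ^{X|V}_v = Bᵀ φ^{Y|V}_v, where φ^{Y|V}_v is the information vector of P_{Y|V}(·|v) relative to P_Y and B is the CDM of (X,Y). -/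
/-!
By the Markov property, `P_{X|V}(x|v) = ∑ y, P_{XY}(x,y) P_{Y|V}(y|v) / P_Y(y)`. On the other side,
`(Bᵀ φ^{Y|V}_v)(x) = (1/√P_X(x)) ∑ y, (P_{XY}(x,y) - P_X(x) P_Y(y)) (P_{Y|V}(y|v) - P_Y(y)) / P_Y(y)`,
and after expanding the product the three cross terms add up to `-P_X(x)`, because
`P_{XY}(x,·)`, `P_Y` and `P_{Y|V}(·|v)` have total masses `P_X(x)`, `1` and `1`.
What is left is `(P_{X|V}(x|v) - P_X(x)) / √P_X(x) = φ^{X|V}_v(x)`.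
-/

open Finset

lemma div_sqrt_mul_mul_sub_div_sqrt {a p q r : ℝ} (ha : 0 ≤ a) (hp : 0 ≤ p) :
    (r - a * p) / √(a * p) * ((q - p) / √p) = (r - a * p) * (q - p) / p / √a := by
  rw [Real.sqrt_mul ha, div_mul_div_comm, mul_assoc, Real.mul_self_sqrt hp,
    div_div, mul_comm p]

lemma sum_sub_mul_mul_sub_div {ι : Type*} (s : Finset ι) {a : ℝ} {p q r : ι → ℝ}
    (hp : ∀ i ∈ s, p i ≠ 0) (hp_sum : ∑ i ∈ s, p i = 1) (hq_sum : ∑ i ∈ s, q i = 1)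
    (hr_sum : ∑ i ∈ s, r i = a) :
    ∑ i ∈ s, (r i - a * p i) * (q i - p i) / p i = ∑ i ∈ s, r i * q i / p i - a := by
  have hterm : ∀ i ∈ s, (r i - a * p i) * (q i - p i) / p i
      = r i * q i / p i - r i - a * q i + a * p i := by
    intro i hi
    field_simp [hp i hi]
    ring
  rw [sum_congr rfl hterm, sum_add_distrib, sum_sub_distrib, sum_sub_distrib, ← mul_sum,
    ← mul_sum, hp_sum, hq_sum, hr_sum]
  ring

theorem stmt_10_general {X Y V : Type*} [Fintype X] [Fintype Y] [Fintype V]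
    (Pj : X → Y → V → ℝ)
    (h1 : ∑ x, ∑ y, ∑ v, Pj x y v = 1)
    (PX : X → ℝ) (PY : Y → ℝ) (PV : V → ℝ)
    (Pxy : X → Y → ℝ) (Pyv : Y → V → ℝ)
    (hPX : ∀ x, PX x = ∑ y, ∑ v, Pj x y v)
    (hPY : ∀ y, PY y = ∑ x, ∑ v, Pj x y v)
    (hPV : ∀ v, PV v = ∑ x, ∑ y, Pj x y v)
    (hPxy : ∀ x y, Pxy x y = ∑ v, Pj x y v)
    (hPyv : ∀ y v, Pyv y v = ∑ x, Pj x y v)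
    (hPXpos : ∀ x, 0 < PX x) (hPYpos : ∀ y, 0 < PY y) (hPVpos : ∀ v, 0 < PV v)
    (hMarkov : ∀ x y v, Pj x y v * PY y = Pxy x y * Pyv y v)
    (B : Matrix Y X ℝ)
    (hB : ∀ y x, B y x = (Pxy x y - PX x * PY y) / Real.sqrt (PX x * PY y)) :
    ∀ v x, ((∑ y, Pj x y v) / PV v - PX x) / Real.sqrt (PX x) =
      ∑ y, B y x * ((Pyv y v / PV v - PY y) / Real.sqrt (PY y)) := by
  intro v x
  have hPY_sum : ∑ y, PY y = 1 := by
    simp only [hPY]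
    rw [sum_comm]
    exact h1
  have hPyv_sum : ∑ y, Pyv y v / PV v = 1 := by
    rw [← sum_div, div_eq_one_iff_eq (hPVpos v).ne', hPV, sum_comm]
    simp only [hPyv]
  have hPxy_sum : ∑ y, Pxy x y = PX x := by simp only [hPxy, hPX]
  have hcond : (∑ y, Pj x y v) / PV v = ∑ y, Pxy x y * (Pyv y v / PV v) / PY y := by
    rw [sum_div]
    refine sum_congr rfl fun y _ => ?_
    rw [eq_div_iff (hPYpos y).ne', div_mul_eq_mul_div, hMarkov, mul_div_assoc]
  rw [hcond, ← sum_sub_mul_mul_sub_div _ (fun y _ => (hPYpos y).ne') hPY_sum hPyv_sum hPxy_sum,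
    sum_div]
  refine sum_congr rfl fun y _ => ?_
  rw [hB, div_sqrt_mul_mul_sub_div_sqrt (hPXpos x).le (hPYpos y).le]

/-- Markov chain information vector transfer: if X ↔ Y ↔ V is a Markov chain,
then φ^{X|V}_v = Bᵀ φ^{Y|V}_v. -/
theorem stmt_10 {X Y V : Type*} [Fintype X] [Fintype Y] [Fintype V]
    (Pj : X → Y → V → ℝ)
    (h0 : ∀ x y v, 0 ≤ Pj x y v) (h1 : ∑ x, ∑ y, ∑ v, Pj x y v = 1)
    (PX : X → ℝ) (PY : Y → ℝ) (PV : V → ℝ)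
    (Pxy : X → Y → ℝ) (Pyv : Y → V → ℝ)
    (hPX : ∀ x, PX x = ∑ y, ∑ v, Pj x y v)
    (hPY : ∀ y, PY y = ∑ x, ∑ v, Pj x y v)
    (hPV : ∀ v, PV v = ∑ x, ∑ y, Pj x y v)
    (hPxy : ∀ x y, Pxy x y = ∑ v, Pj x y v)
    (hPyv : ∀ y v, Pyv y v = ∑ x, Pj x y v)
    (hPXpos : ∀ x, 0 < PX x) (hPYpos : ∀ y, 0 < PY y) (hPVpos : ∀ v, 0 < PV v)
    (hMarkov : ∀ x y v, Pj x y v * PY y = Pxy x y * Pyv y v)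
    (B : Matrix Y X ℝ)
    (hB : ∀ y x, B y x = (Pxy x y - PX x * PY y) / Real.sqrt (PX x * PY y)) :
    ∀ v x, ((∑ y, Pj x y v) / PV v - PX x) / Real.sqrt (PX x) =
      ∑ y, B y x * ((Pyv y v / PV v - PY y) / Real.sqrt (PY y)) :=
  stmt_10_general Pj h1 PX PY PV Pxy Pyv hPX hPY hPV hPxy hPyv hPXpos hPYpos hPVpos hMarkov B hB
end
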